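/- Suppose a state's votes in a given election are split into two districts, with district i receiving dᵢ Democratic votes and rᵢ Republican votes (all positive reals), and suppose the Democratic party wins both districts, i.e. dᵢ > rᵢ for i = 1, 2. Then the efficiency gap of the plan equals (3(r₁ + r₂) − (d₁ + d₂)) / (2(d₁ + d₂ + r₁ + r₂)). In particular, the efficiency gap depends only on the statewide totals D = d₁ + d₂ and R = r₁ + r₂ and not on how the votes are divided between the two districts: every two-district plan in which one party wins both seats has the same efficiency gap. -/

import Mathlib

/-- Democratic wasted votes in a district with `d` Democratic and `r` Republican votes:
the losing party wastes all of its votes, the winning party wastes its votes in excess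
of half the district's total. -/
noncomputable def wastedDem (d r : ℝ) : ℝ := if d > r then d - (d + r) / 2 else d

/-- Republican wasted votes in a district with `d` Democratic and `r` Republican votes. -/
noncomputable def wastedRep (d r : ℝ) : ℝ := if r > d then r - (d + r) / 2 else r

/-- The efficiency gap of a two-district plan:
(total wasted Republican votes − total wasted Democratic votes) / (total votes). -/
noncomputable def effGap (d₁ r₁ d₂ r₂ : ℝ) : ℝ :=
  ((wastedRep d₁ r₁ + wastedRep d₂ r₂) - (wastedDem d₁ r₁ + wastedDem d₂ r₂)) /
    (d₁ + d₂ + r₁ + r₂)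

/-! A district winner wastes half its margin and the loser wastes everything, so when the
Democrats win both districts the wasted-vote difference is `R - (D - R) / 2`, a function of
the statewide totals alone. -/

lemma wastedDem_of_lt {d r : ℝ} (h : r < d) : wastedDem d r = (d - r) / 2 := by
  rw [wastedDem, if_pos h]
  ring

lemma wastedRep_of_lt {d r : ℝ} (h : r < d) : wastedRep d r = r :=
  if_neg h.not_gt

theorem effGap_of_lt_of_lt {d₁ r₁ d₂ r₂ : ℝ} (h₁ : r₁ < d₁) (h₂ : r₂ < d₂) :
    effGap d₁ r₁ d₂ r₂ = (3 * (r₁ + r₂) - (d₁ + d₂)) / (2 * (d₁ + d₂ + r₁ + r₂)) := by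
  rw [effGap, wastedDem_of_lt h₁, wastedDem_of_lt h₂, wastedRep_of_lt h₁, wastedRep_of_lt h₂,
    mul_comm, ← div_div]
  ring

theorem effGap_dem_sweep_general (d₁ r₁ d₂ r₂ : ℝ)
    (hw₁ : d₁ > r₁) (hw₂ : d₂ > r₂) :
    effGap d₁ r₁ d₂ r₂ =
        (3 * (r₁ + r₂) - (d₁ + d₂)) / (2 * (d₁ + d₂ + r₁ + r₂)) ∧
      ∀ d₁' r₁' d₂' r₂' : ℝ, 0 < d₁' → 0 < r₁' → 0 < d₂' → 0 < r₂' →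
        d₁' > r₁' → d₂' > r₂' → d₁' + d₂' = d₁ + d₂ → r₁' + r₂' = r₁ + r₂ →
        effGap d₁' r₁' d₂' r₂' = effGap d₁ r₁ d₂ r₂ := by
  refine ⟨effGap_of_lt_of_lt hw₁ hw₂, fun d₁' r₁' d₂' r₂' _ _ _ _ hw₁' hw₂' hD hR => ?_⟩
  rw [effGap_of_lt_of_lt hw₁ hw₂, effGap_of_lt_of_lt hw₁' hw₂']
  congr 1 <;> linarith

/-- If the Democratic party wins both districts of a two-district plan,
then the efficiency gap equals `(3(r₁ + r₂) − (d₁ + d₂)) / (2(d₁ + d₂ + r₁ + r₂))`.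
In particular it depends only on the statewide totals `D = d₁ + d₂` and `R = r₁ + r₂`:
every two-district plan with the same totals in which the Democratic party wins both
seats has the same efficiency gap. -/
theorem effGap_dem_sweep (d₁ r₁ d₂ r₂ : ℝ)
    (hd₁ : 0 < d₁) (hr₁ : 0 < r₁) (hd₂ : 0 < d₂) (hr₂ : 0 < r₂)
    (hw₁ : d₁ > r₁) (hw₂ : d₂ > r₂) :
    effGap d₁ r₁ d₂ r₂ =
        (3 * (r₁ + r₂) - (d₁ + d₂)) / (2 * (d₁ + d₂ + r₁ + r₂)) ∧
      ∀ d₁' r₁' d₂' r₂' : ℝ, 0 < d₁' → 0 < r₁' → 0 < d₂' → 0 < r₂' →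
        d₁' > r₁' → d₂' > r₂' → d₁' + d₂' = d₁ + d₂ → r₁' + r₂' = r₁ + r₂ →
        effGap d₁' r₁' d₂' r₂' = effGap d₁ r₁ d₂ r₂ :=
  effGap_dem_sweep_general d₁ r₁ d₂ r₂ hw₁ hw₂
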